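/- Let Q > 0 and let (X,d,μ) be a locally compact, locally Ahlfors Q-regular metric measure space. Set ω_Q := π^{Q/2}/Γ(Q/2 + 1) and θ_r(x) := μ(B_r(x))/(ω_Q r^Q). Assume that for every compactly supported continuous function φ on X, ∫_X φ · |1 − θ_r|/r dμ → 0 as r ↓ 0. Then a Lipschitz function u : X → ℝ admits a weak AMV Laplacian if and only if it admits a weak SAMV Laplacian, and in that case the two weak Laplacians coincide. -/

import Mathlib

/-!
The two operators differ by `(2r²)⁻¹ ⨍_{B_r(x)} (u y - u x) (μ(B_r x) / μ(B_r y) - 1) dμ(y)`.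
The Lipschitz bound `|u y - u x| ≤ K r` and the Ahlfors lower bound `μ(B_r y) ≥ C⁻¹ r^Q` give
`|μ(B_r x) / μ(B_r y) - 1| ≤ C ω_Q (|1 - θ_r x| + |1 - θ_r y|)`, hence
`|Δ̃_r u - Δ_r u|(x) ≲ r⁻¹ (|1 - θ_r x| + ⨍_{B_r(x)} |1 - θ_r|)`. Tested against `φ`, the first
term tends to `0` by hypothesis. For the second, Tonelli exchanges `x` and `y`, the bound
`μ(B_r y) ≤ C r^Q` cancels the normalisation `μ(B_r x)⁻¹ ≤ C r^{-Q}` of the average, and what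
remains is at most a multiple of `∫ ψ |1 - θ_r| / r` for a cutoff `ψ = 1` near `supp φ`, which
tends to `0` as well. So `∫ φ Δ̃_r u - ∫ φ Δ_r u → 0`, and one weak limit exists iff the other
does, with the same value.
-/

open MeasureTheory Filter Metric Set
open scoped ENNReal Topology NNReal

/-- The AMV `r`-operator for a continuous function (`u*(x) = u(x)`). -/
noncomputable def amvOp {X : Type*} [MetricSpace X] [MeasurableSpace X]
    (μ : Measure X) (u : X → ℝ) (x : X) (r : ℝ) : ℝ :=
  (1 / r ^ 2) * ⨍ y in ball x r, (u y - u x) ∂μ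

/-- The SAMV `r`-operator for a continuous function (`u*(x) = u(x)`). -/
noncomputable def samvOp {X : Type*} [MetricSpace X] [MeasurableSpace X]
    (μ : Measure X) (u : X → ℝ) (x : X) (r : ℝ) : ℝ :=
  (1 / (2 * r ^ 2)) *
    ⨍ y in ball x r, (u y - u x) * (1 + (μ (ball x r)).toReal / (μ (ball y r)).toReal) ∂μ

/-- The normalized volume ratio `θ_r(x) = μ(B_r(x))/(ω_Q r^Q)`,
where `ω_Q = π^{Q/2}/Γ(Q/2+1)`. -/
noncomputable def thetaR {X : Type*} [MetricSpace X] [MeasurableSpace X]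
    (μ : Measure X) (Q : ℝ) (x : X) (r : ℝ) : ℝ :=
  (μ (ball x r)).toReal / (Real.pi ^ (Q / 2) / Real.Gamma (Q / 2 + 1) * r ^ Q)

theorem measure_lt_top_of_measureReal_pos {α : Type*} [MeasurableSpace α] {μ : Measure α}
    {s : Set α} (h : 0 < μ.real s) : μ s < ∞ :=
  (ENNReal.toReal_pos_iff.1 h).2

theorem abs_setAverage_le_of_forall_abs_le {α : Type*} [MeasurableSpace α] {μ : Measure α}
    {s : Set α} {f : α → ℝ} {c : ℝ} (hc : 0 ≤ c) (hf : ∀ y ∈ s, |f y| ≤ c) :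
    |⨍ y in s, f y ∂μ| ≤ c := by
  rw [setAverage_eq, smul_eq_mul, abs_mul, abs_inv, abs_of_nonneg measureReal_nonneg]
  rcases (measureReal_nonneg (μ := μ) (s := s)).eq_or_lt with h0 | hpos
  · simp [← h0, hc]
  rw [inv_mul_le_iff₀ hpos, mul_comm, ← Real.norm_eq_abs]
  exact norm_setIntegral_le_of_norm_le_const (measure_lt_top_of_measureReal_pos hpos)
    fun y hy => (Real.norm_eq_abs _).trans_le (hf y hy)

theorem abs_div_sub_one_le {a b s C : ℝ} (hs : 0 < s) (hC : 0 < C) (hb : C⁻¹ * s ≤ b) :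
    |a / b - 1| ≤ C * (|1 - a / s| + |1 - b / s|) := by
  have hb0 : 0 < b := lt_of_lt_of_le (by positivity) hb
  have hsb : s / b ≤ C := by
    rw [div_le_iff₀ hb0]
    calc s = C * (C⁻¹ * s) := by field_simp
      _ ≤ C * b := by gcongr
  calc |a / b - 1| = s / b * |a / s - b / s| := by
        rw [← abs_of_pos (div_pos hs hb0), ← abs_mul]
        congr 1
        field_simp
    _ ≤ C * (|1 - a / s| + |1 - b / s|) := by
        gcongr
        calc |a / s - b / s| ≤ |a / s - 1| + |1 - b / s| := abs_sub_le _ _ _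
          _ = |1 - a / s| + |1 - b / s| := by rw [abs_sub_comm]

theorem LipschitzWith.abs_sub_le_of_mem_ball {X : Type*} [PseudoMetricSpace X] {u : X → ℝ}
    {K : ℝ≥0} (hu : LipschitzWith K u) {x y : X} {r : ℝ} (hy : y ∈ ball x r) :
    |u y - u x| ≤ K * r := by
  rw [← Real.dist_eq]
  exact (hu.dist_le_mul y x).trans (by gcongr; exact (mem_ball.1 hy).le)

section BallIntegrals

variable {X : Type*} [MetricSpace X] [MeasurableSpace X]

theorem lowerSemicontinuous_measure_ball (μ : Measure X) (r : ℝ) :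
    LowerSemicontinuous fun x => μ (ball x r) := by
  intro x t ht
  change t < μ (ball x r) at ht
  have hunion : ball x r = ⋃ n : ℕ, ball x (r - 1 / (n + 1)) := by
    ext y
    simp only [mem_ball, mem_iUnion]
    refine ⟨fun hy => ?_, fun ⟨n, hn⟩ => hn.trans_le (sub_le_self _ (by positivity))⟩
    obtain ⟨n, hn⟩ := exists_nat_one_div_lt (sub_pos.2 hy)
    exact ⟨n, by linarith⟩
  have hmono : Monotone fun n : ℕ => ball x (r - 1 / (n + 1)) := fun m n hmn =>
    ball_subset_ball (by gcongr)
  rw [hunion, hmono.measure_iUnion] at ht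
  obtain ⟨n, hn⟩ := lt_iSup_iff.1 ht
  filter_upwards [ball_mem_nhds x (Nat.one_div_pos_of_nat : (0 : ℝ) < 1 / (n + 1))] with x' hx'
  refine hn.trans_le (measure_mono (ball_subset_ball' ?_))
  linarith [mem_ball'.1 hx']

variable [BorelSpace X]

theorem measurable_setLIntegral_ball (μ : Measure X) (g : X → ℝ≥0∞) (r : ℝ) :
    Measurable fun x => ∫⁻ y in ball x r, g y ∂μ := by
  simp_rw [← withDensity_apply g measurableSet_ball]
  exact (lowerSemicontinuous_measure_ball _ r).measurable

theorem measurable_measureReal_ball (μ : Measure X) (r : ℝ) :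
    Measurable fun x => μ.real (ball x r) :=
  (lowerSemicontinuous_measure_ball μ r).measurable.ennreal_toReal

theorem integrableOn_ball_of_forall_abs_le {μ : Measure X} {x : X} {r : ℝ}
    (hfin : μ (ball x r) < ∞) {v : X → ℝ} (hv : Measurable v) {c : ℝ}
    (hb : ∀ y ∈ ball x r, |v y| ≤ c) : IntegrableOn v (ball x r) μ :=
  Measure.integrableOn_of_bounded hfin.ne hv.aestronglyMeasurable
    (ae_restrict_of_forall_mem measurableSet_ball hb)

theorem exists_measurable_eq_setIntegral_ball (μ : Measure X) (v : X → ℝ) (r : ℝ) :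
    ∃ F : X → ℝ, Measurable F ∧
      ∀ x, IntegrableOn v (ball x r) μ → ∫ y in ball x r, v y ∂μ = F x :=
  ⟨fun x => (∫⁻ y in ball x r, ENNReal.ofReal (v y) ∂μ).toReal
      - (∫⁻ y in ball x r, ENNReal.ofReal (-v y) ∂μ).toReal,
    (measurable_setLIntegral_ball μ _ r).ennreal_toReal.sub
      (measurable_setLIntegral_ball μ _ r).ennreal_toReal,
    fun _ hx => integral_eq_lintegral_pos_part_sub_lintegral_neg_part hx⟩

/- `X` need not be separable, so `{p : X × X | dist p.2 p.1 < r}` need not be measurable for the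
product σ-algebra; over a separable set of first coordinates it agrees with a countable union of
rectangles. -/
theorem TopologicalSpace.IsSeparable.exists_measurableSet_dist_lt {S : Set X}
    (hS : TopologicalSpace.IsSeparable S) (r : ℝ) :
    ∃ U : Set (X × X), MeasurableSet U ∧ ∀ x ∈ S, ∀ y, (x, y) ∈ U ↔ dist y x < r := by
  obtain ⟨c, hc, hSc⟩ := hS
  refine ⟨⋃ z ∈ c, ⋃ q : ℚ, ball z q ×ˢ ball z (r - q),
    .biUnion hc fun z _ => .iUnion fun q => measurableSet_ball.prod measurableSet_ball,
    fun x hx y => ?_⟩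
  simp only [mem_iUnion, mem_prod, mem_ball, exists_prop]
  constructor
  · rintro ⟨z, -, q, hxz, hyz⟩
    linarith [dist_triangle_right y x z]
  · intro hxy
    obtain ⟨z, hzc, hxz⟩ := Metric.mem_closure_iff.1 (hSc hx) ((r - dist y x) / 2) (by linarith)
    obtain ⟨q, hq₁, hq₂⟩ := exists_rat_btwn hxz
    exact ⟨z, hzc, q, hq₁, by linarith [dist_triangle y x z]⟩

theorem setLIntegral_setLIntegral_ball_eq (μ : Measure X) {S : Set X}
    (hS : TopologicalSpace.IsSeparable S) (hSm : MeasurableSet S) {r : ℝ} (hr : 0 < r)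
    (hfin : μ (thickening r S) < ∞)
    {w : X → ℝ≥0∞} (hw : Measurable w) :
    ∫⁻ x in S, ∫⁻ y in ball x r, w y ∂μ ∂μ
      = ∫⁻ y in thickening r S, w y * μ (ball y r ∩ S) ∂μ := by
  have : IsFiniteMeasure (μ.restrict (thickening r S)) := isFiniteMeasure_restrict.2 hfin.ne
  have : IsFiniteMeasure (μ.restrict S) := isFiniteMeasure_restrict.2
    ((measure_mono (self_subset_thickening hr S)).trans_lt hfin).ne
  obtain ⟨U, hUm, hU⟩ := hS.exists_measurableSet_dist_lt r
  have hf : AEMeasurable (Function.uncurry fun x y => (ball x r).indicator w y)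
      ((μ.restrict S).prod (μ.restrict (thickening r S))) := by
    refine ⟨U.indicator fun p => w p.2, (hw.comp measurable_snd).indicator hUm, ?_⟩
    filter_upwards [Measure.quasiMeasurePreserving_fst.ae (ae_restrict_mem hSm)]
      with ⟨x, y⟩ hx
    simp only [Function.uncurry, indicator, mem_ball, hU x hx y]
  calc ∫⁻ x in S, ∫⁻ y in ball x r, w y ∂μ ∂μ
      = ∫⁻ x in S, ∫⁻ y in thickening r S, (ball x r).indicator w y ∂μ ∂μ := by
        refine setLIntegral_congr_fun hSm fun x hx => ?_
        rw [lintegral_indicator measurableSet_ball, Measure.restrict_restrict measurableSet_ball,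
          inter_eq_self_of_subset_left (ball_subset_thickening hx r)]
    _ = ∫⁻ y in thickening r S, ∫⁻ x in S, (ball x r).indicator w y ∂μ ∂μ :=
        lintegral_lintegral_swap hf
    _ = ∫⁻ y in thickening r S, w y * μ (ball y r ∩ S) ∂μ := by
        refine lintegral_congr fun y => ?_
        have : ∀ x, (ball x r).indicator w y = (ball y r).indicator (fun _ => w y) x :=
          fun x => by simp only [indicator, mem_ball, dist_comm y x]
        simp_rw [this]
        rw [lintegral_indicator_const measurableSet_ball, Measure.restrict_apply measurableSet_ball]

theorem setLIntegral_setLIntegral_ball_le (μ : Measure X) {S : Set X}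
    (hS : TopologicalSpace.IsSeparable S) (hSm : MeasurableSet S) {r : ℝ} (hr : 0 < r)
    (hfin : μ (thickening r S) < ∞)
    {w : X → ℝ≥0∞} (hw : Measurable w) {B : ℝ≥0∞}
    (hB : ∀ y ∈ thickening r S, μ (ball y r) ≤ B) :
    ∫⁻ x in S, ∫⁻ y in ball x r, w y ∂μ ∂μ ≤ B * ∫⁻ y in thickening r S, w y ∂μ := by
  rw [setLIntegral_setLIntegral_ball_eq μ hS hSm hr hfin hw, ← lintegral_const_mul B hw]
  refine setLIntegral_mono' isOpen_thickening.measurableSet fun y hy => ?_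
  rw [mul_comm B]
  gcongr
  exact (measure_mono inter_subset_left).trans (hB y hy)

end BallIntegrals

section Ahlfors

variable {X : Type*} [MetricSpace X] [MeasurableSpace X]

def IsLocallyAhlforsRegular (μ : Measure X) (Q : ℝ) : Prop :=
  ∀ x₀ : X, ∃ V ∈ 𝓝 x₀, ∃ r₀ C : ℝ, 0 < r₀ ∧ 0 < C ∧
    ∀ x ∈ V, ∀ r : ℝ, 0 < r → r < r₀ →
      ENNReal.ofReal (C⁻¹ * r ^ Q) ≤ μ (ball x r) ∧ μ (ball x r) ≤ ENNReal.ofReal (C * r ^ Q)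

variable {μ : Measure X} {Q : ℝ}

theorem IsLocallyAhlforsRegular.isLocallyFiniteMeasure (h : IsLocallyAhlforsRegular μ Q) :
    IsLocallyFiniteMeasure μ where
  finiteAtNhds x₀ := by
    obtain ⟨V, hV, r₀, C, hr₀, -, hb⟩ := h x₀
    exact ⟨ball x₀ (r₀ / 2), ball_mem_nhds _ (half_pos hr₀),
      (hb x₀ (mem_of_mem_nhds hV) _ (half_pos hr₀) (half_lt_self hr₀)).2.trans_lt
        ENNReal.ofReal_lt_top⟩

theorem IsLocallyAhlforsRegular.exists_uniform_of_isCompact (h : IsLocallyAhlforsRegular μ Q)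
    {W : Set X} (hW : IsCompact W) :
    ∃ r₀ C : ℝ, 0 < r₀ ∧ 0 < C ∧ ∀ x ∈ W, ∀ r : ℝ, 0 < r → r < r₀ →
      C⁻¹ * r ^ Q ≤ μ.real (ball x r) ∧ μ.real (ball x r) ≤ C * r ^ Q := by
  refine hW.induction_on ⟨1, 1, one_pos, one_pos, by simp⟩
    (fun s t hst ⟨r₀, C, hr₀, hC, hb⟩ => ⟨r₀, C, hr₀, hC, fun x hx => hb x (hst hx)⟩)
    (fun s t ⟨r₁, C₁, hr₁, hC₁, hb₁⟩ ⟨r₂, C₂, hr₂, hC₂, hb₂⟩ => ?_) fun x₀ _ => ?_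
  · refine ⟨min r₁ r₂, max C₁ C₂, lt_min hr₁ hr₂, lt_max_of_lt_left hC₁, ?_⟩
    have weaken : ∀ {C : ℝ}, 0 < C → C ≤ max C₁ C₂ → ∀ x r, 0 < r →
        C⁻¹ * r ^ Q ≤ μ.real (ball x r) ∧ μ.real (ball x r) ≤ C * r ^ Q →
        (max C₁ C₂)⁻¹ * r ^ Q ≤ μ.real (ball x r) ∧ μ.real (ball x r) ≤ max C₁ C₂ * r ^ Q :=
      fun hC hCle x r hr ⟨h₁, h₂⟩ =>
        have hrQ : 0 ≤ r ^ Q := (Real.rpow_pos_of_pos hr Q).le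
        ⟨le_trans (by gcongr) h₁, h₂.trans (by gcongr)⟩
    rintro x (hx | hx) r hr hrr
    · exact weaken hC₁ (le_max_left _ _) x r hr (hb₁ x hx r hr (hrr.trans_le (min_le_left _ _)))
    · exact weaken hC₂ (le_max_right _ _) x r hr (hb₂ x hx r hr (hrr.trans_le (min_le_right _ _)))
  · obtain ⟨V, hV, r₀, C, hr₀, hC, hb⟩ := h x₀
    refine ⟨V, mem_nhdsWithin_of_mem_nhds hV, r₀, C, hr₀, hC, fun x hx r hr hrr => ?_⟩
    obtain ⟨h₁, h₂⟩ := hb x hx r hr hrr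
    have hfin : μ (ball x r) ≠ ∞ := ne_top_of_le_ne_top ENNReal.ofReal_ne_top h₂
    exact ⟨(ENNReal.ofReal_le_iff_le_toReal hfin).1 h₁,
      ENNReal.toReal_le_of_le_ofReal (by positivity) h₂⟩

end Ahlfors

noncomputable def unitBallVolume (Q : ℝ) : ℝ := Real.pi ^ (Q / 2) / Real.Gamma (Q / 2 + 1)

theorem unitBallVolume_pos {Q : ℝ} (hQ : -2 < Q) : 0 < unitBallVolume Q :=
  div_pos (Real.rpow_pos_of_pos Real.pi_pos _) (Real.Gamma_pos_of_pos (by linarith))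

section Theta

variable {X : Type*} [MetricSpace X] [MeasurableSpace X] {μ : Measure X} {Q : ℝ}
  {x : X} {r C : ℝ}

theorem thetaR_eq (x : X) (r : ℝ) :
    thetaR μ Q x r = μ.real (ball x r) / (unitBallVolume Q * r ^ Q) := rfl

theorem abs_one_sub_thetaR_le (hr : 0 < r) (hω : 0 < unitBallVolume Q)
    (hx : μ.real (ball x r) ≤ C * r ^ Q) :
    |1 - thetaR μ Q x r| ≤ 1 + C / unitBallVolume Q := by
  have hrQ := Real.rpow_pos_of_pos hr Q
  have hθ : thetaR μ Q x r ≤ C / unitBallVolume Q := by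
    rw [thetaR_eq, div_le_div_iff₀ (by positivity) hω]
    nlinarith
  have hθ0 : 0 ≤ thetaR μ Q x r := div_nonneg measureReal_nonneg (by positivity)
  rw [abs_le]
  constructor <;> linarith

theorem abs_measureReal_ball_div_sub_one_le (hr : 0 < r) (hω : 0 < unitBallVolume Q)
    (hC : 0 < C) {y : X} (hy : C⁻¹ * r ^ Q ≤ μ.real (ball y r)) :
    |μ.real (ball x r) / μ.real (ball y r) - 1|
      ≤ C * unitBallVolume Q * (|1 - thetaR μ Q x r| + |1 - thetaR μ Q y r|) := by
  have hrQ := Real.rpow_pos_of_pos hr Q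
  rw [thetaR_eq, thetaR_eq]
  refine abs_div_sub_one_le (by positivity) (by positivity) ?_
  calc (C * unitBallVolume Q)⁻¹ * (unitBallVolume Q * r ^ Q) = C⁻¹ * r ^ Q := by field_simp
    _ ≤ μ.real (ball y r) := hy

variable [BorelSpace X]

theorem measurable_thetaR (r : ℝ) : Measurable fun x => thetaR μ Q x r :=
  (measurable_measureReal_ball μ r).div_const _

theorem integrableOn_abs_one_sub_thetaR (hr : 0 < r) (hω : 0 < unitBallVolume Q)
    (hfin : μ (ball x r) < ∞) (hbd : ∀ y ∈ ball x r, μ.real (ball y r) ≤ C * r ^ Q) :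
    IntegrableOn (fun y => |1 - thetaR μ Q y r|) (ball x r) μ :=
  integrableOn_ball_of_forall_abs_le hfin (measurable_const.sub (measurable_thetaR r)).abs
    fun y hy => by rw [abs_abs]; exact abs_one_sub_thetaR_le hr hω (hbd y hy)

end Theta

section Operators

variable {X : Type*} [MetricSpace X] [MeasurableSpace X] {μ : Measure X}
  {u : X → ℝ} {K : ℝ≥0} {x : X} {r Q C : ℝ}

theorem samvOp_sub_amvOp
    (h₁ : IntegrableOn (fun y => u y - u x) (ball x r) μ)
    (h₂ : IntegrableOn (fun y => (u y - u x) * (μ.real (ball x r) / μ.real (ball y r) - 1))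
      (ball x r) μ) :
    samvOp μ u x r - amvOp μ u x r = (2 * r ^ 2)⁻¹ *
      ⨍ y in ball x r, (u y - u x) * (μ.real (ball x r) / μ.real (ball y r) - 1) ∂μ := by
  have hsplit : ∫ y in ball x r, (u y - u x) * (1 + μ.real (ball x r) / μ.real (ball y r)) ∂μ
      = 2 * ∫ y in ball x r, (u y - u x) ∂μ
        + ∫ y in ball x r, (u y - u x) * (μ.real (ball x r) / μ.real (ball y r) - 1) ∂μ := by
    rw [← integral_const_mul, ← integral_add (h₁.const_mul 2) h₂]
    congr 1 with y
    ring
  change (1 / (2 * r ^ 2)) *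
      ⨍ y in ball x r, (u y - u x) * (1 + μ.real (ball x r) / μ.real (ball y r)) ∂μ
    - (1 / r ^ 2) * ⨍ y in ball x r, (u y - u x) ∂μ = _
  simp only [setAverage_eq, smul_eq_mul]
  rw [hsplit]
  ring

theorem amvOp_eq (hfin : μ (ball x r) < ∞) (h₁ : IntegrableOn u (ball x r) μ) :
    amvOp μ u x r = 1 / r ^ 2 * ((μ.real (ball x r))⁻¹ *
      (∫ y in ball x r, u y ∂μ - μ.real (ball x r) * u x)) := by
  simp only [amvOp, setAverage_eq, smul_eq_mul]
  rw [integral_sub h₁ (integrableOn_const hfin.ne), setIntegral_const, smul_eq_mul]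

theorem samvOp_eq (hfin : μ (ball x r) < ∞) (h₁ : IntegrableOn u (ball x r) μ)
    (h₂ : IntegrableOn (fun y => u y / μ.real (ball y r)) (ball x r) μ)
    (h₃ : IntegrableOn (fun y => (μ.real (ball y r))⁻¹) (ball x r) μ) :
    samvOp μ u x r = 1 / (2 * r ^ 2) * ((μ.real (ball x r))⁻¹ *
      (∫ y in ball x r, u y ∂μ - μ.real (ball x r) * u x
        + (μ.real (ball x r) * ∫ y in ball x r, u y / μ.real (ball y r) ∂μ
          - μ.real (ball x r) * u x * ∫ y in ball x r, (μ.real (ball y r))⁻¹ ∂μ))) := by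
  set a : X → ℝ := fun y => μ.real (ball y r)
  have hsplit : ∀ y, (u y - u x) * (1 + a x / a y)
      = (u y - u x) + (a x * (u y / a y) - a x * u x * (a y)⁻¹) := fun y => by ring
  have i₁ : IntegrableOn (fun y => u y - u x) (ball x r) μ := h₁.sub (integrableOn_const hfin.ne)
  have i₂ : IntegrableOn (fun y => a x * (u y / a y) - a x * u x * (a y)⁻¹) (ball x r) μ :=
    (h₂.const_mul _).sub (h₃.const_mul _)
  change 1 / (2 * r ^ 2) * ⨍ y in ball x r, (u y - u x) * (1 + a x / a y) ∂μ = _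
  rw [setAverage_eq, smul_eq_mul]
  simp_rw [hsplit]
  rw [integral_add i₁ i₂, integral_sub h₁ (integrableOn_const hfin.ne),
    integral_sub (h₂.const_mul _) (h₃.const_mul _), integral_const_mul, integral_const_mul,
    setIntegral_const, smul_eq_mul]

theorem abs_amvOp_le (hu : LipschitzWith K u) (hr : 0 < r) : |amvOp μ u x r| ≤ K / r := by
  have hbd : |⨍ y in ball x r, (u y - u x) ∂μ| ≤ K * r :=
    abs_setAverage_le_of_forall_abs_le (by positivity) fun y hy => hu.abs_sub_le_of_mem_ball hy
  rw [amvOp, abs_mul, abs_of_pos (by positivity)]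
  calc 1 / r ^ 2 * |⨍ y in ball x r, (u y - u x) ∂μ| ≤ 1 / r ^ 2 * (K * r) := by gcongr
    _ = K / r := by field_simp

theorem abs_samvOp_le (hu : LipschitzWith K u) (hr : 0 < r) (hC : 0 < C)
    (hbd : ∀ y ∈ ball x r, C⁻¹ * r ^ Q ≤ μ.real (ball y r) ∧ μ.real (ball y r) ≤ C * r ^ Q) :
    |samvOp μ u x r| ≤ K * (1 + C ^ 2) / (2 * r) := by
  have hrQ : 0 < r ^ Q := Real.rpow_pos_of_pos hr Q
  have hx := (hbd x (mem_ball_self hr)).2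
  have hbd' : |⨍ y in ball x r, (u y - u x) * (1 + μ.real (ball x r) / μ.real (ball y r)) ∂μ|
      ≤ K * r * (1 + C ^ 2) :=
    abs_setAverage_le_of_forall_abs_le (by positivity) fun y hy => by
      have hratio : μ.real (ball x r) / μ.real (ball y r) ≤ C ^ 2 := by
        rw [div_le_iff₀ (lt_of_lt_of_le (by positivity) (hbd y hy).1)]
        calc μ.real (ball x r) ≤ C * r ^ Q := hx
          _ = C ^ 2 * (C⁻¹ * r ^ Q) := by field_simp
          _ ≤ C ^ 2 * μ.real (ball y r) := by gcongr; exact (hbd y hy).1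
      rw [abs_mul, abs_of_nonneg
        (by positivity : (0 : ℝ) ≤ 1 + μ.real (ball x r) / μ.real (ball y r))]
      gcongr
      exact hu.abs_sub_le_of_mem_ball hy
  rw [samvOp, abs_mul, abs_of_pos (by positivity)]
  calc 1 / (2 * r ^ 2) *
        |⨍ y in ball x r, (u y - u x) * (1 + μ.real (ball x r) / μ.real (ball y r)) ∂μ|
      ≤ 1 / (2 * r ^ 2) * (K * r * (1 + C ^ 2)) := by gcongr
    _ = K * (1 + C ^ 2) / (2 * r) := by field_simp

variable [BorelSpace X]

theorem abs_samvOp_sub_amvOp_le (hu : LipschitzWith K u) (hr : 0 < r)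
    (hω : 0 < unitBallVolume Q) (hC : 0 < C)
    (hbd : ∀ y ∈ ball x r, C⁻¹ * r ^ Q ≤ μ.real (ball y r) ∧ μ.real (ball y r) ≤ C * r ^ Q) :
    |samvOp μ u x r - amvOp μ u x r| ≤ K * C * unitBallVolume Q / (2 * r) *
      (|1 - thetaR μ Q x r| + ⨍ y in ball x r, |1 - thetaR μ Q y r| ∂μ) := by
  set ω := unitBallVolume Q
  set θ := fun y => |1 - thetaR μ Q y r|
  have hrQ : 0 < r ^ Q := Real.rpow_pos_of_pos hr Q
  have hax : 0 < μ.real (ball x r) := lt_of_lt_of_le (by positivity) (hbd x (mem_ball_self hr)).1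
  have hfin := measure_lt_top_of_measureReal_pos hax
  have hθ := integrableOn_abs_one_sub_thetaR hr hω hfin fun y hy => (hbd y hy).2
  have hdom : ∀ y ∈ ball x r,
      |(u y - u x) * (μ.real (ball x r) / μ.real (ball y r) - 1)|
        ≤ K * r * (C * ω) * (θ x + θ y) := fun y hy => by
    rw [abs_mul, mul_assoc]
    exact mul_le_mul (hu.abs_sub_le_of_mem_ball hy)
      (abs_measureReal_ball_div_sub_one_le hr hω hC (hbd y hy).1) (abs_nonneg _) (by positivity)
  have hdomi : IntegrableOn (fun y => K * r * (C * ω) * (θ x + θ y)) (ball x r) μ :=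
    ((integrableOn_const hfin.ne).add hθ).const_mul _
  have h₁ : IntegrableOn (fun y => u y - u x) (ball x r) μ :=
    integrableOn_ball_of_forall_abs_le hfin (hu.continuous.measurable.sub measurable_const)
      fun y hy => hu.abs_sub_le_of_mem_ball hy
  have hm := measurable_measureReal_ball μ r
  have hum := hu.continuous.measurable
  have h₂ : IntegrableOn (fun y => (u y - u x) * (μ.real (ball x r) / μ.real (ball y r) - 1))
      (ball x r) μ :=
    hdomi.mono' (by fun_prop) (ae_restrict_of_forall_mem measurableSet_ball hdom)
  rw [samvOp_sub_amvOp h₁ h₂, abs_mul, abs_of_pos (by positivity), setAverage_eq,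
    setAverage_eq, smul_eq_mul, smul_eq_mul, abs_mul, abs_inv, abs_of_pos hax]
  calc (2 * r ^ 2)⁻¹ * ((μ.real (ball x r))⁻¹ *
        |∫ y in ball x r, (u y - u x) * (μ.real (ball x r) / μ.real (ball y r) - 1) ∂μ|)
      ≤ (2 * r ^ 2)⁻¹ * ((μ.real (ball x r))⁻¹ *
          ∫ y in ball x r, K * r * (C * ω) * (θ x + θ y) ∂μ) := by
        gcongr
        exact abs_integral_le_integral_abs.trans
          (setIntegral_mono_on h₂.abs hdomi measurableSet_ball hdom)
    _ = K * C * ω / (2 * r) * (θ x + (μ.real (ball x r))⁻¹ * ∫ y in ball x r, θ y ∂μ) := by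
        rw [integral_const_mul, integral_add (integrableOn_const hfin.ne :
          IntegrableOn (fun _ => θ x) (ball x r) μ) hθ, setIntegral_const, smul_eq_mul]
        field_simp
        rfl

end Operators

section Integrability

variable {X : Type*} [MetricSpace X] [MeasurableSpace X] {μ : Measure X} {φ : X → ℝ}

theorem measurable_mul_of_eqOn_tsupport {T G : X → ℝ} (hφ : Measurable φ) (hG : Measurable G)
    (h : EqOn T G (tsupport φ)) : Measurable fun x => φ x * T x := by
  have : (fun x => φ x * T x) = fun x => φ x * G x := funext fun x => by
    by_cases hx : x ∈ tsupport φ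
    · rw [h hx]
    · simp [image_eq_zero_of_notMem_tsupport hx]
  exact this ▸ hφ.mul hG

variable [BorelSpace X]

theorem integrable_mul_of_forall_abs_le [IsFiniteMeasureOnCompacts μ] {T : X → ℝ}
    (hφ : Continuous φ) (hφs : HasCompactSupport φ) (hm : Measurable fun x => φ x * T x)
    {c : ℝ} (hb : ∀ x ∈ tsupport φ, |T x| ≤ c) : Integrable (fun x => φ x * T x) μ := by
  obtain ⟨M, hM⟩ := hφ.bounded_above_of_compact_support hφs
  refine IntegrableOn.integrable_of_forall_notMem_eq_zero (s := tsupport φ) ?_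
    fun x hx => by simp [image_eq_zero_of_notMem_tsupport hx]
  refine Measure.integrableOn_of_bounded (M := M * c) (hφs.isCompact.measure_lt_top).ne
    hm.aestronglyMeasurable (ae_restrict_of_forall_mem (isClosed_tsupport φ).measurableSet
      fun x hx => ?_)
  rw [norm_mul, Real.norm_eq_abs (T x)]
  exact mul_le_mul (hM x) (hb x hx) (abs_nonneg _) ((norm_nonneg _).trans (hM x))

variable {u : X → ℝ} {K : ℝ≥0} {r Q C : ℝ}

theorem integrable_mul_abs_one_sub_thetaR_div [IsFiniteMeasureOnCompacts μ]
    (hφ : Continuous φ) (hφs : HasCompactSupport φ) (hr : 0 < r) (hω : 0 < unitBallVolume Q)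
    (hbd : ∀ y ∈ tsupport φ, μ.real (ball y r) ≤ C * r ^ Q) :
    Integrable (fun y => φ y * (|1 - thetaR μ Q y r| / r)) μ :=
  integrable_mul_of_forall_abs_le hφ hφs
    (hφ.measurable.mul ((measurable_const.sub (measurable_thetaR r)).abs.div_const r))
    (c := (1 + C / unitBallVolume Q) / r) fun y hy => by
      rw [abs_div, abs_abs, abs_of_pos hr]
      exact div_le_div_of_nonneg_right (abs_one_sub_thetaR_le hr hω (hbd y hy)) hr.le

theorem measurable_mul_amvOp (hφ : Measurable φ) (hu : LipschitzWith K u)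
    (hfin : ∀ x ∈ tsupport φ, μ (ball x r) < ∞) :
    Measurable fun x => φ x * amvOp μ u x r := by
  obtain ⟨F, hFm, hF⟩ := exists_measurable_eq_setIntegral_ball μ u r
  have hm := measurable_measureReal_ball μ r
  have hum := hu.continuous.measurable
  refine measurable_mul_of_eqOn_tsupport hφ (G := fun x =>
    1 / r ^ 2 * ((μ.real (ball x r))⁻¹ * (F x - μ.real (ball x r) * u x))) (by fun_prop)
    fun x hx => ?_
  have h₁ : IntegrableOn u (ball x r) μ :=
    integrableOn_ball_of_forall_abs_le (hfin x hx) hum (c := |u x| + K * r) fun y hy => by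
      linarith [abs_sub_abs_le_abs_sub (u y) (u x), hu.abs_sub_le_of_mem_ball hy]
  rw [amvOp_eq (hfin x hx) h₁, hF x h₁]

theorem measurable_mul_samvOp (hφ : Measurable φ) (hu : LipschitzWith K u)
    (hfin : ∀ x ∈ tsupport φ, μ (ball x r) < ∞) {c : ℝ} (hc : 0 < c)
    (hbd : ∀ x ∈ tsupport φ, ∀ y ∈ ball x r, c ≤ μ.real (ball y r)) :
    Measurable fun x => φ x * samvOp μ u x r := by
  set a : X → ℝ := fun y => μ.real (ball y r)
  have hm : Measurable a := measurable_measureReal_ball μ r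
  have hum := hu.continuous.measurable
  obtain ⟨F₁, hF₁m, hF₁⟩ := exists_measurable_eq_setIntegral_ball μ u r
  obtain ⟨F₂, hF₂m, hF₂⟩ := exists_measurable_eq_setIntegral_ball μ (fun y => u y / a y) r
  obtain ⟨F₃, hF₃m, hF₃⟩ := exists_measurable_eq_setIntegral_ball μ (fun y => (a y)⁻¹) r
  refine measurable_mul_of_eqOn_tsupport hφ (G := fun x => 1 / (2 * r ^ 2) * ((a x)⁻¹ *
    (F₁ x - a x * u x + (a x * F₂ x - a x * u x * F₃ x)))) (by fun_prop) fun x hx => ?_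
  have hu_bd : ∀ y ∈ ball x r, |u y| ≤ |u x| + K * r := fun y hy => by
    linarith [abs_sub_abs_le_abs_sub (u y) (u x), hu.abs_sub_le_of_mem_ball hy]
  have ha_bd : ∀ y ∈ ball x r, |(a y)⁻¹| ≤ c⁻¹ := fun y hy => by
    rw [abs_inv, abs_of_pos (hc.trans_le (hbd x hx y hy))]
    exact inv_anti₀ hc (hbd x hx y hy)
  have h₁ : IntegrableOn u (ball x r) μ :=
    integrableOn_ball_of_forall_abs_le (hfin x hx) hum hu_bd
  have h₂ : IntegrableOn (fun y => u y / a y) (ball x r) μ :=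
    integrableOn_ball_of_forall_abs_le (hfin x hx) (hum.div hm) fun y hy => by
      rw [div_eq_mul_inv, abs_mul]
      have hr := pos_of_mem_ball hy
      exact mul_le_mul (hu_bd y hy) (ha_bd y hy) (abs_nonneg _) (by positivity)
  have h₃ : IntegrableOn (fun y => (a y)⁻¹) (ball x r) μ :=
    integrableOn_ball_of_forall_abs_le (hfin x hx) hm.inv ha_bd
  rw [samvOp_eq (hfin x hx) h₁ h₂ h₃, hF₁ x h₁, hF₂ x h₂, hF₃ x h₃]

variable [IsFiniteMeasureOnCompacts μ]

theorem integrable_mul_amvOp (hφ : Continuous φ) (hφs : HasCompactSupport φ)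
    (hu : LipschitzWith K u) (hr : 0 < r) (hfin : ∀ x ∈ tsupport φ, μ (ball x r) < ∞) :
    Integrable (fun x => φ x * amvOp μ u x r) μ :=
  integrable_mul_of_forall_abs_le hφ hφs (measurable_mul_amvOp hφ.measurable hu hfin)
    fun _ _ => abs_amvOp_le hu hr

theorem integrable_mul_samvOp (hφ : Continuous φ) (hφs : HasCompactSupport φ)
    (hu : LipschitzWith K u) (hr : 0 < r) (hC : 0 < C)
    (hbd : ∀ x ∈ tsupport φ, ∀ y ∈ ball x r,
      C⁻¹ * r ^ Q ≤ μ.real (ball y r) ∧ μ.real (ball y r) ≤ C * r ^ Q) :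
    Integrable (fun x => φ x * samvOp μ u x r) μ := by
  have hc : 0 < C⁻¹ * r ^ Q := by have := Real.rpow_pos_of_pos hr Q; positivity
  refine integrable_mul_of_forall_abs_le hφ hφs (measurable_mul_samvOp hφ.measurable hu
    (fun x hx => measure_lt_top_of_measureReal_pos
      (hc.trans_le (hbd x hx x (mem_ball_self hr)).1)) hc fun x hx y hy => (hbd x hx y hy).1)
    fun x hx => abs_samvOp_le hu hr hC (hbd x hx)

end Integrability

section MainEstimate

variable {X : Type*} [MetricSpace X] [MeasurableSpace X] [BorelSpace X] {μ : Measure X}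
  {u φ : X → ℝ} {K : ℝ≥0} {x : X} {r Q C M : ℝ}

theorem abs_mul_samvOp_sub_mul_amvOp_le (hu : LipschitzWith K u) (hM : ∀ x, |φ x| ≤ M)
    (hr : 0 < r) (hω : 0 < unitBallVolume Q) (hC : 0 < C)
    (hbd : ∀ y ∈ ball x r, C⁻¹ * r ^ Q ≤ μ.real (ball y r) ∧ μ.real (ball y r) ≤ C * r ^ Q) :
    |φ x * samvOp μ u x r - φ x * amvOp μ u x r|
      ≤ K * C * unitBallVolume Q / 2 * (|φ x| * (|1 - thetaR μ Q x r| / r))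
        + K * C * unitBallVolume Q / 2 * M * C / r ^ Q *
          ∫ y in ball x r, |1 - thetaR μ Q y r| / r ∂μ := by
  have hrQ : 0 < r ^ Q := Real.rpow_pos_of_pos hr Q
  have hinv : (μ.real (ball x r))⁻¹ ≤ C / r ^ Q := by
    rw [← inv_div]
    exact inv_anti₀ (by positivity) (by rw [div_eq_inv_mul]; exact (hbd x (mem_ball_self hr)).1)
  have hdiff := abs_samvOp_sub_amvOp_le hu hr hω hC hbd
  rw [setAverage_eq, smul_eq_mul] at hdiff
  set c := (K : ℝ) * C * unitBallVolume Q
  set P := ∫ y in ball x r, |1 - thetaR μ Q y r| ∂μ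
  have hP : 0 ≤ P := integral_nonneg fun _ => abs_nonneg _
  rw [← mul_sub, abs_mul, integral_div]
  calc |φ x| * |samvOp μ u x r - amvOp μ u x r|
      ≤ |φ x| * (c / (2 * r) * (|1 - thetaR μ Q x r| + C / r ^ Q * P)) := by
        gcongr
        exact hdiff.trans (by gcongr)
    _ = c / 2 * (|φ x| * (|1 - thetaR μ Q x r| / r)) + c / (2 * r) * (C / r ^ Q) * P * |φ x| := by
        field_simp
    _ ≤ c / 2 * (|φ x| * (|1 - thetaR μ Q x r| / r)) + c / (2 * r) * (C / r ^ Q) * P * M := by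
        gcongr
        exact hM x
    _ = c / 2 * (|φ x| * (|1 - thetaR μ Q x r| / r)) + c / 2 * M * C / r ^ Q * (P / r) := by
        field_simp

theorem ofReal_abs_mul_samvOp_sub_mul_amvOp_le (hu : LipschitzWith K u) (hM : ∀ x, |φ x| ≤ M)
    (hr : 0 < r) (hω : 0 < unitBallVolume Q) (hC : 0 < C)
    (hbd : ∀ y ∈ ball x r, C⁻¹ * r ^ Q ≤ μ.real (ball y r) ∧ μ.real (ball y r) ≤ C * r ^ Q) :
    ENNReal.ofReal |φ x * samvOp μ u x r - φ x * amvOp μ u x r|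
      ≤ ENNReal.ofReal (K * C * unitBallVolume Q / 2) *
          ENNReal.ofReal (|φ x| * (|1 - thetaR μ Q x r| / r))
        + ENNReal.ofReal (K * C * unitBallVolume Q / 2 * M * C / r ^ Q) *
          ∫⁻ y in ball x r, ENNReal.ofReal (|1 - thetaR μ Q y r| / r) ∂μ := by
  have hrQ : 0 < r ^ Q := Real.rpow_pos_of_pos hr Q
  have hM0 : 0 ≤ M := (abs_nonneg _).trans (hM x)
  have hfin := measure_lt_top_of_measureReal_pos
    (lt_of_lt_of_le (by positivity) (hbd x (mem_ball_self hr)).1)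
  have hθ := (integrableOn_abs_one_sub_thetaR hr hω hfin fun y hy => (hbd y hy).2).div_const r
  rw [← ofReal_integral_eq_lintegral_ofReal hθ (ae_of_all _ fun y => by positivity),
    ← ENNReal.ofReal_mul (by positivity), ← ENNReal.ofReal_mul (by positivity)]
  exact (ENNReal.ofReal_le_ofReal (abs_mul_samvOp_sub_mul_amvOp_le hu hM hr hω hC hbd)).trans
    ENNReal.ofReal_add_le

theorem lintegral_abs_mul_samvOp_sub_mul_amvOp_le (hu : LipschitzWith K u)
    (hφ : Measurable φ) (hφs : HasCompactSupport φ) (hM : ∀ x, |φ x| ≤ M) (hr : 0 < r)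
    (hω : 0 < unitBallVolume Q) (hC : 0 < C)
    (hbd : ∀ y ∈ thickening r (tsupport φ),
      C⁻¹ * r ^ Q ≤ μ.real (ball y r) ∧ μ.real (ball y r) ≤ C * r ^ Q)
    (hfin : μ (thickening r (tsupport φ)) < ∞) :
    ∫⁻ x, ENNReal.ofReal |φ x * samvOp μ u x r - φ x * amvOp μ u x r| ∂μ
      ≤ ENNReal.ofReal (K * C * unitBallVolume Q / 2) *
          ∫⁻ x, ENNReal.ofReal (|φ x| * (|1 - thetaR μ Q x r| / r)) ∂μ
        + ENNReal.ofReal (K * C * unitBallVolume Q / 2 * M * C ^ 2) *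
          ∫⁻ y in thickening r (tsupport φ), ENNReal.ofReal (|1 - thetaR μ Q y r| / r) ∂μ := by
  set S := tsupport φ
  set w : X → ℝ≥0∞ := fun y => ENNReal.ofReal (|1 - thetaR μ Q y r| / r)
  set c₁ := ENNReal.ofReal (K * C * unitBallVolume Q / 2)
  set c₂ := ENNReal.ofReal (K * C * unitBallVolume Q / 2 * M * C / r ^ Q)
  have hrQ : 0 < r ^ Q := Real.rpow_pos_of_pos hr Q
  have hwm : Measurable w :=
    ((measurable_const.sub (measurable_thetaR r)).abs.div_const r).ennreal_ofReal
  have hφw : Measurable fun x => ENNReal.ofReal (|φ x| * (|1 - thetaR μ Q x r| / r)) :=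
    (hφ.abs.mul ((measurable_const.sub (measurable_thetaR r)).abs.div_const r)).ennreal_ofReal
  have hB : ∀ y ∈ thickening r S, μ (ball y r) ≤ ENNReal.ofReal (C * r ^ Q) := fun y hy =>
    (ENNReal.le_ofReal_iff_toReal_le (measure_lt_top_of_measureReal_pos
      (lt_of_lt_of_le (by positivity) (hbd y hy).1)).ne (by positivity)).2 (hbd y hy).2
  calc ∫⁻ x, ENNReal.ofReal |φ x * samvOp μ u x r - φ x * amvOp μ u x r| ∂μ
      = ∫⁻ x in S, ENNReal.ofReal |φ x * samvOp μ u x r - φ x * amvOp μ u x r| ∂μ := by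
        refine (setLIntegral_eq_of_support_subset fun x hx => ?_).symm
        by_contra h
        exact hx (by simp [image_eq_zero_of_notMem_tsupport h])
    _ ≤ ∫⁻ x in S, (c₁ * ENNReal.ofReal (|φ x| * (|1 - thetaR μ Q x r| / r))
          + c₂ * ∫⁻ y in ball x r, w y ∂μ) ∂μ :=
        setLIntegral_mono ((hφw.const_mul _).add
          ((measurable_setLIntegral_ball μ _ r).const_mul _)) fun x hx =>
          ofReal_abs_mul_samvOp_sub_mul_amvOp_le hu hM hr hω hC
            fun y hy => hbd y (ball_subset_thickening hx r hy)
    _ = c₁ * ∫⁻ x in S, ENNReal.ofReal (|φ x| * (|1 - thetaR μ Q x r| / r)) ∂μ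
          + c₂ * ∫⁻ x in S, ∫⁻ y in ball x r, w y ∂μ ∂μ := by
        rw [lintegral_add_left (hφw.const_mul _), lintegral_const_mul _ hφw,
          lintegral_const_mul _ (measurable_setLIntegral_ball μ _ r)]
    _ ≤ c₁ * ∫⁻ x, ENNReal.ofReal (|φ x| * (|1 - thetaR μ Q x r| / r)) ∂μ
          + c₂ * (ENNReal.ofReal (C * r ^ Q) * ∫⁻ y in thickening r S, w y ∂μ) := by
        gcongr
        · exact Measure.restrict_le_self
        · exact setLIntegral_setLIntegral_ball_le μ hφs.isCompact.isSeparable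
            (isClosed_tsupport φ).measurableSet hr hfin hwm hB
    _ = _ := by
        rw [← mul_assoc, ← ENNReal.ofReal_mul' (by positivity)]
        congr 3
        field_simp

theorem abs_integral_mul_samvOp_sub_integral_mul_amvOp_le [IsFiniteMeasureOnCompacts μ]
    (hu : LipschitzWith K u) (hφ : Continuous φ) (hφs : HasCompactSupport φ)
    (hM : ∀ x, |φ x| ≤ M) (hM0 : 0 ≤ M) (hr : 0 < r) (hω : 0 < unitBallVolume Q) (hC : 0 < C)
    (hbd : ∀ y ∈ thickening r (tsupport φ),
      C⁻¹ * r ^ Q ≤ μ.real (ball y r) ∧ μ.real (ball y r) ≤ C * r ^ Q)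
    (hfin : μ (thickening r (tsupport φ)) < ∞) {ψ : X → ℝ}
    (hψ : ∀ y ∈ thickening r (tsupport φ), 1 ≤ ψ y) (hψ0 : ∀ y, 0 ≤ ψ y)
    (hψi : Integrable (fun y => ψ y * (|1 - thetaR μ Q y r| / r)) μ) :
    |∫ x, φ x * samvOp μ u x r ∂μ - ∫ x, φ x * amvOp μ u x r ∂μ|
      ≤ K * C * unitBallVolume Q / 2 * ∫ x, |φ x| * (|1 - thetaR μ Q x r| / r) ∂μ
        + K * C * unitBallVolume Q / 2 * M * C ^ 2 *
          ∫ y, ψ y * (|1 - thetaR μ Q y r| / r) ∂μ := by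
  set S := tsupport φ
  set w : X → ℝ := fun y => |1 - thetaR μ Q y r| / r
  have hw0 : ∀ y, 0 ≤ w y := fun y => by positivity
  have hbdx : ∀ x ∈ S, ∀ y ∈ ball x r,
      C⁻¹ * r ^ Q ≤ μ.real (ball y r) ∧ μ.real (ball y r) ≤ C * r ^ Q :=
    fun x hx y hy => hbd y (ball_subset_thickening hx r hy)
  have hsamv := integrable_mul_samvOp hφ hφs hu hr hC hbdx (μ := μ)
  have hamv := integrable_mul_amvOp hφ hφs hu hr (μ := μ) fun x hx =>
    measure_lt_top_of_measureReal_pos (lt_of_lt_of_le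
      (by have := Real.rpow_pos_of_pos hr Q; positivity) (hbdx x hx x (mem_ball_self hr)).1)
  have hφw : Integrable (fun x => |φ x| * w x) μ :=
    integrable_mul_abs_one_sub_thetaR_div hφ.abs hφs.abs hr hω fun y hy =>
      (hbdx y (tsupport_comp_subset abs_zero φ hy) y (mem_ball_self hr)).2
  have hψw : ∫⁻ y in thickening r S, ENNReal.ofReal (w y) ∂μ
      ≤ ENNReal.ofReal (∫ y, ψ y * w y ∂μ) := by
    rw [ofReal_integral_eq_lintegral_ofReal hψi
      (ae_of_all _ fun y => mul_nonneg (hψ0 y) (hw0 y))]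
    refine (setLIntegral_mono' isOpen_thickening.measurableSet fun y hy => ?_).trans
      (setLIntegral_le_lintegral _ _)
    exact ENNReal.ofReal_le_ofReal (le_mul_of_one_le_left (hw0 y) (hψ y hy))
  have hA : 0 ≤ ∫ x, |φ x| * w x ∂μ :=
    integral_nonneg fun x => mul_nonneg (abs_nonneg (φ x)) (hw0 x)
  have hB : 0 ≤ ∫ y, ψ y * w y ∂μ := integral_nonneg fun y => mul_nonneg (hψ0 y) (hw0 y)
  rw [← integral_sub hsamv hamv, ← Real.norm_eq_abs]
  refine (norm_integral_le_lintegral_norm _).trans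
    (ENNReal.toReal_le_of_le_ofReal (by positivity) ?_)
  simp only [Real.norm_eq_abs]
  refine (lintegral_abs_mul_samvOp_sub_mul_amvOp_le hu hφ.measurable hφs hM hr hω hC hbd
    hfin).trans ?_
  rw [ENNReal.ofReal_add (by positivity) (by positivity)]
  gcongr
  · rw [ENNReal.ofReal_mul (by positivity), ofReal_integral_eq_lintegral_ofReal hφw
      (ae_of_all _ fun x => mul_nonneg (abs_nonneg _) (hw0 x))]
  · rw [ENNReal.ofReal_mul (p := K * C * unitBallVolume Q / 2 * M * C ^ 2) (by positivity)]
    exact mul_le_mul_right hψw _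

end MainEstimate

theorem IsCompact.exists_cutoff_cthickening {X : Type*} [MetricSpace X] [LocallyCompactSpace X]
    {S : Set X} (hS : IsCompact S) :
    ∃ δ > 0, IsCompact (cthickening δ S) ∧ ∃ ψ : X → ℝ, Continuous ψ ∧ HasCompactSupport ψ ∧
      (∀ y, 0 ≤ ψ y) ∧ EqOn ψ 1 (cthickening (δ / 2) S) ∧ tsupport ψ ⊆ cthickening δ S := by
  obtain ⟨δ, hδ, hW⟩ := hS.exists_isCompact_cthickening
  obtain ⟨ψ, hψ1, hψ0, hψs, hψI⟩ := exists_continuous_one_zero_of_isCompact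
    (hW.of_isClosed_subset isClosed_cthickening (cthickening_mono (half_le_self hδ.le) S))
    isOpen_thickening.isClosed_compl
    (disjoint_compl_right_iff_subset.2 (cthickening_subset_thickening' hδ (half_lt_self hδ) S))
  refine ⟨δ, hδ, hW, ψ, ψ.continuous, hψs, fun y => (hψI y).1, hψ1, ?_⟩
  refine (closure_mono fun y hy => ?_).trans (closure_thickening_subset_cthickening δ S)
  by_contra h
  exact hy (hψ0 h)

theorem tendsto_integral_mul_samvOp_sub_integral_mul_amvOp {X : Type*} [MetricSpace X]
    [MeasurableSpace X] [BorelSpace X] [LocallyCompactSpace X] {μ : Measure X} {Q : ℝ}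
    (hA : IsLocallyAhlforsRegular μ Q) (hQ : -2 < Q)
    (hweak : ∀ φ : X → ℝ, Continuous φ → HasCompactSupport φ →
      Tendsto (fun r => ∫ x, φ x * (|1 - thetaR μ Q x r| / r) ∂μ) (𝓝[>] (0 : ℝ)) (𝓝 0))
    {u : X → ℝ} {K : ℝ≥0} (hu : LipschitzWith K u)
    {φ : X → ℝ} (hφ : Continuous φ) (hφs : HasCompactSupport φ) :
    Tendsto (fun r => ∫ x, φ x * samvOp μ u x r ∂μ - ∫ x, φ x * amvOp μ u x r ∂μ)
      (𝓝[>] (0 : ℝ)) (𝓝 0) := by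
  have := hA.isLocallyFiniteMeasure
  set S := tsupport φ
  obtain ⟨δ, hδ, hW, ψ, hψc, hψs, hψ0, hψ1, hψW⟩ := hφs.isCompact.exists_cutoff_cthickening
  obtain ⟨r₀, C, hr₀, hC, hbd⟩ := hA.exists_uniform_of_isCompact hW
  obtain ⟨M, hM⟩ := hφ.bounded_above_of_compact_support hφs
  have hω := unitBallVolume_pos hQ
  have hbound := ((hweak _ hφ.abs hφs.abs).const_mul (K * C * unitBallVolume Q / 2)).add
    ((hweak ψ hψc hψs).const_mul (K * C * unitBallVolume Q / 2 * max M 0 * C ^ 2))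
  rw [mul_zero, mul_zero, add_zero] at hbound
  refine squeeze_zero_norm' ?_ hbound
  filter_upwards [Ioo_mem_nhdsGT (lt_min hr₀ (half_pos hδ))] with r ⟨hr, hrr⟩
  have hrr₀ : r < r₀ := hrr.trans_le (min_le_left _ _)
  have hthick : thickening r S ⊆ cthickening (δ / 2) S := (thickening_subset_cthickening r S).trans
    (cthickening_mono (hrr.le.trans (min_le_right _ _)) S)
  have hthickW := hthick.trans (cthickening_mono (half_le_self hδ.le) S)
  rw [Real.norm_eq_abs]
  exact abs_integral_mul_samvOp_sub_integral_mul_amvOp_le hu hφ hφs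
    (fun x => ((Real.norm_eq_abs _).symm.trans_le (hM x)).trans (le_max_left _ _))
    (le_max_right _ _) hr hω hC (fun y hy => hbd y (hthickW hy) r hr hrr₀)
    ((measure_mono hthickW).trans_lt hW.measure_lt_top) (fun y hy => (hψ1 (hthick hy)).ge)
    hψ0 (integrable_mul_abs_one_sub_thetaR_div hψc hψs hr hω fun y hy =>
      (hbd y (hψW hy) r hr hrr₀).2)

theorem stmt_12_general {X : Type*} [MetricSpace X] [MeasurableSpace X] [BorelSpace X]
    [LocallyCompactSpace X]
    (μ : Measure X)
    (Q : ℝ) (hQ : 0 < Q)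
    (hAhlfors : ∀ x₀ : X, ∃ V ∈ 𝓝 x₀, ∃ r₀ C : ℝ, 0 < r₀ ∧ 0 < C ∧
      ∀ x ∈ V, ∀ r : ℝ, 0 < r → r < r₀ →
        ENNReal.ofReal (C⁻¹ * r ^ Q) ≤ μ (ball x r) ∧
        μ (ball x r) ≤ ENNReal.ofReal (C * r ^ Q))
    (hweak : ∀ φ : X → ℝ, Continuous φ → HasCompactSupport φ →
      Tendsto (fun r => ∫ x, φ x * (|1 - thetaR μ Q x r| / r) ∂μ) (𝓝[>] (0 : ℝ)) (𝓝 0))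
    (u : X → ℝ) (K : ℝ≥0) (hu : LipschitzWith K u)
    (ν₁ ν₂ : Measure X) :
    (∀ φ : X → ℝ, Continuous φ → HasCompactSupport φ →
      Tendsto (fun r => ∫ x, φ x * amvOp μ u x r ∂μ) (𝓝[>] (0 : ℝ))
        (𝓝 (∫ x, φ x ∂ν₁ - ∫ x, φ x ∂ν₂))) ↔
    (∀ φ : X → ℝ, Continuous φ → HasCompactSupport φ →
      Tendsto (fun r => ∫ x, φ x * samvOp μ u x r ∂μ) (𝓝[>] (0 : ℝ))
        (𝓝 (∫ x, φ x ∂ν₁ - ∫ x, φ x ∂ν₂))) := by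
  have hdiff := fun φ (hφ : Continuous φ) (hφs : HasCompactSupport φ) =>
    tendsto_integral_mul_samvOp_sub_integral_mul_amvOp hAhlfors (by linarith) hweak hu hφ hφs
  refine ⟨fun h φ hφ hφs => ?_, fun h φ hφ hφs => ?_⟩
  · simpa using (h φ hφ hφs).add (hdiff φ hφ hφs)
  · simpa using (h φ hφ hφs).sub (hdiff φ hφ hφs)

/-- On a locally compact, locally Ahlfors `Q`-regular metric measure space
such that `|1 − θ_r|/r · μ ⇀ 0` as `r ↓ 0`, a Lipschitz function admits a weak AMV Laplacian
iff it admits a weak SAMV Laplacian, and the two coincide; a signed Radon measure is encoded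
as a difference `ν₁ − ν₂` of measures finite on compact sets. -/
theorem stmt_12 {X : Type*} [MetricSpace X] [MeasurableSpace X] [BorelSpace X]
    [LocallyCompactSpace X]
    (μ : Measure X)
    (hμ : ∀ (x : X) (r : ℝ), 0 < r → 0 < μ (ball x r) ∧ μ (ball x r) < ∞)
    (Q : ℝ) (hQ : 0 < Q)
    (hAhlfors : ∀ x₀ : X, ∃ V ∈ 𝓝 x₀, ∃ r₀ C : ℝ, 0 < r₀ ∧ 0 < C ∧
      ∀ x ∈ V, ∀ r : ℝ, 0 < r → r < r₀ →
        ENNReal.ofReal (C⁻¹ * r ^ Q) ≤ μ (ball x r) ∧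
        μ (ball x r) ≤ ENNReal.ofReal (C * r ^ Q))
    (hweak : ∀ φ : X → ℝ, Continuous φ → HasCompactSupport φ →
      Tendsto (fun r => ∫ x, φ x * (|1 - thetaR μ Q x r| / r) ∂μ) (𝓝[>] (0 : ℝ)) (𝓝 0))
    (u : X → ℝ) (K : ℝ≥0) (hu : LipschitzWith K u)
    (ν₁ ν₂ : Measure X) (hν₁ : IsFiniteMeasureOnCompacts ν₁)
    (hν₂ : IsFiniteMeasureOnCompacts ν₂) :
    (∀ φ : X → ℝ, Continuous φ → HasCompactSupport φ →
      Tendsto (fun r => ∫ x, φ x * amvOp μ u x r ∂μ) (𝓝[>] (0 : ℝ))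
        (𝓝 (∫ x, φ x ∂ν₁ - ∫ x, φ x ∂ν₂))) ↔
    (∀ φ : X → ℝ, Continuous φ → HasCompactSupport φ →
      Tendsto (fun r => ∫ x, φ x * samvOp μ u x r ∂μ) (𝓝[>] (0 : ℝ))
        (𝓝 (∫ x, φ x ∂ν₁ - ∫ x, φ x ∂ν₂))) :=
  stmt_12_general μ Q hQ hAhlfors hweak u K hu ν₁ ν₂
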